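/- arXiv:1512.01605 — 6 statements merged into one kernel-verified Lean document; each statement's English description precedes it below -/
import Mathlib

section
/- Let k ≥ 1 be an integer and let x, y : ℤ → ℝ be sequences of positive reals satisfying x(n+1) = 1/y(n-k) and y(n+1) = x(n-k)/y(n-k) for all n ≥ 0. Then both x and y are periodic with period 3(k+1), i.e., x(n + 3(k+1)) = x(n) and y(n + 3(k+1)) = y(n) for all n ≥ 0. -/
theorem stmt_0 (k : ℤ) (hk : 1 ≤ k) (x y : ℤ → ℝ)
    (hpos : ∀ n : ℤ, 0 < x n ∧ 0 < y n)
    (hx : ∀ n : ℤ, 0 ≤ n → x (n + 1) = 1 / y (n - k))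
    (hy : ∀ n : ℤ, 0 ≤ n → y (n + 1) = x (n - k) / y (n - k)) :
    ∀ n : ℤ, 0 ≤ n → x (n + 3 * (k + 1)) = x n ∧ y (n + 3 * (k + 1)) = y n := by
  intro n hn
  have h1 : x (n + k + 1) = 1 / y n := by
    have := hx (n + k) (by linarith)
    rwa [show n + k - k = n by ring] at this
  have h2 : y (n + k + 1) = x n / y n := by
    have := hy (n + k) (by linarith)
    rwa [show n + k - k = n by ring] at this
  have h3 : x (n + 2 * k + 2) = 1 / y (n + k + 1) := by
    have := hx (n + 2 * k + 1) (by linarith)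
    rwa [show n + 2 * k + 1 + 1 = n + 2 * k + 2 by ring,
      show n + 2 * k + 1 - k = n + k + 1 by ring] at this
  have h4 : y (n + 2 * k + 2) = x (n + k + 1) / y (n + k + 1) := by
    have := hy (n + 2 * k + 1) (by linarith)
    rwa [show n + 2 * k + 1 + 1 = n + 2 * k + 2 by ring,
      show n + 2 * k + 1 - k = n + k + 1 by ring] at this
  have h5 : x (n + 3 * (k + 1)) = 1 / y (n + 2 * k + 2) := by
    have := hx (n + 3 * k + 2) (by linarith)
    rwa [show n + 3 * k + 2 + 1 = n + 3 * (k + 1) by ring,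
      show n + 3 * k + 2 - k = n + 2 * k + 2 by ring] at this
  have h6 : y (n + 3 * (k + 1)) = x (n + 2 * k + 2) / y (n + 2 * k + 2) := by
    have := hy (n + 3 * k + 2) (by linarith)
    rwa [show n + 3 * k + 2 + 1 = n + 3 * (k + 1) by ring,
      show n + 3 * k + 2 - k = n + 2 * k + 2 by ring] at this
  have pxn := (hpos n).1
  have pyn := (hpos n).2
  rw [h5, h6, h4, h3, h2, h1]
  constructor <;> field_simp
end

section
/- Let k ≥ 1 and let a : ℕ → ℝ satisfy the linear recurrence a(n+1) + a(n-k) + a(n-2k-1) = 0 for all n ≥ 2k+1. Then a is periodic with period 3(k+1): a(n + 3(k+1)) = a(n) for all n. -/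
theorem stmt_1 (k : ℕ) (hk : 1 ≤ k) (a : ℕ → ℝ)
    (hrec : ∀ n : ℕ, 2 * k + 1 ≤ n → a (n + 1) + a (n - k) + a (n - (2 * k + 1)) = 0) :
    ∀ n : ℕ, a (n + 3 * (k + 1)) = a n := by
  have key : ∀ m : ℕ, a (m + (2 * k + 2)) + a (m + (k + 1)) + a m = 0 := by
    intro m
    have h := hrec (m + (2 * k + 1)) (by omega)
    have e1 : m + (2 * k + 1) + 1 = m + (2 * k + 2) := by omega
    have e2 : m + (2 * k + 1) - k = m + (k + 1) := by omega
    have e3 : m + (2 * k + 1) - (2 * k + 1) = m := by omega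
    rw [e1, e2, e3] at h
    exact h
  intro n
  have h1 := key n
  have h2 := key (n + (k + 1))
  have e : n + (k + 1) + (2 * k + 2) = n + 3 * (k + 1) := by omega
  have e2 : n + (k + 1) + (k + 1) = n + (2 * k + 2) := by omega
  rw [e, e2] at h2
  linarith
end

section
/- Let k ≥ 1 and let x, y : ℤ → ℝ be nonzero sequences satisfying x(n+1) = 1/y(n-k) and y(n+1) = y(n-k)/(x(n)y(n)) for all n ≥ 0, with x(0)y(0) = 1. Then x(n)y(n) = 1 for all n ≥ 0, and y(n+1) = y(n-k) for all n ≥ 0, so every solution is periodic with period k+1. -/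
theorem stmt_4_general (k : ℤ) (x y : ℤ → ℝ)
    (hnz : ∀ n : ℤ, x n ≠ 0 ∧ y n ≠ 0)
    (hx : ∀ n : ℤ, 0 ≤ n → x (n + 1) = 1 / y (n - k))
    (hy : ∀ n : ℤ, 0 ≤ n → y (n + 1) = y (n - k) / (x n * y n))
    (h0 : x 0 * y 0 = 1) :
    (∀ n : ℤ, 0 ≤ n → x n * y n = 1) ∧ (∀ n : ℤ, 0 ≤ n → y (n + 1) = y (n - k)) := by
  have shift_of_invariant {n : ℤ} (hn : 0 ≤ n) (h : x n * y n = 1) : y (n + 1) = y (n - k) := by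
    rw [hy n hn, h, div_one]
  have invariant : ∀ n : ℤ, 0 ≤ n → x n * y n = 1 := by
    intro n hn
    induction n, hn using Int.leInduction with
    | base => exact h0
    | succ m hm ih =>
      rw [hx m hm, shift_of_invariant hm ih, one_div, inv_mul_cancel₀ (hnz (m - k)).2]
  exact ⟨invariant, fun n hn => shift_of_invariant hn (invariant n hn)⟩

theorem stmt_4 (k : ℤ) (hk : 1 ≤ k) (x y : ℤ → ℝ)
    (hnz : ∀ n : ℤ, x n ≠ 0 ∧ y n ≠ 0)
    (hx : ∀ n : ℤ, 0 ≤ n → x (n + 1) = 1 / y (n - k))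
    (hy : ∀ n : ℤ, 0 ≤ n → y (n + 1) = y (n - k) / (x n * y n))
    (h0 : x 0 * y 0 = 1) :
    (∀ n : ℤ, 0 ≤ n → x n * y n = 1) ∧ (∀ n : ℤ, 0 ≤ n → y (n + 1) = y (n - k)) :=
  stmt_4_general k x y hnz hx hy h0
end

section
/- Let k, m ≥ 1 with k even, and let a : ℕ → ℝ satisfy a(n+1) + a(n-m) - a(n-k) - a(n-m-k-1) = 0 for all n ≥ m+k+1. Then a is periodic with period 2(k+1)(m+1). -/
theorem stmt_6 (k m : ℕ) (hk : 1 ≤ k) (hm : 1 ≤ m) (hke : Even k) (a : ℕ → ℝ)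
    (hrec : ∀ n : ℕ, m + k + 1 ≤ n →
      a (n + 1) + a (n - m) - a (n - k) - a (n - (m + k + 1)) = 0) :
    ∀ n : ℕ, a (n + 2 * (k + 1) * (m + 1)) = a n := by
  set b : ℕ → ℝ := fun t => a (t + (k + 1)) - a t with hbdef
  have hb : ∀ t, b (t + (m + 1)) = - b t := by
    intro t
    have h := hrec (t + (m + k + 1)) (by omega)
    have e1 : t + (m + k + 1) + 1 = (t + (m + 1)) + (k + 1) := by omega
    have e2 : t + (m + k + 1) - m = t + (k + 1) := by omega
    have e3 : t + (m + k + 1) - k = t + (m + 1) := by omega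
    have e4 : t + (m + k + 1) - (m + k + 1) = t := by omega
    rw [e1, e2, e3, e4] at h
    simp only [hbdef]
    linarith
  have hb2 : ∀ j t, b (t + j * (m + 1)) = (-1 : ℝ) ^ j * b t := by
    intro j
    induction j with
    | zero => simp
    | succ j ih =>
      intro t
      have e : t + (j + 1) * (m + 1) = (t + j * (m + 1)) + (m + 1) := by ring
      rw [e, hb, ih]
      ring
  have hbk : ∀ t, b (t + (k + 1) * (m + 1)) = - b t := by
    intro t
    rw [hb2 (k + 1) t, Odd.neg_one_pow hke.add_one]
    ring
  have hsum : ∀ N t, a (t + N * (k + 1)) =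
      a t + ∑ i ∈ Finset.range N, b (t + i * (k + 1)) := by
    intro N
    induction N with
    | zero => simp
    | succ N ih =>
      intro t
      rw [Finset.sum_range_succ]
      have e : t + (N + 1) * (k + 1) = (t + N * (k + 1)) + (k + 1) := by ring
      rw [e]
      have h := ih t
      simp only [hbdef] at h ⊢
      linarith
  intro n
  have e : n + 2 * (k + 1) * (m + 1) = n + (2 * (m + 1)) * (k + 1) := by ring
  rw [e, hsum]
  have hz : ∑ i ∈ Finset.range (2 * (m + 1)), b (n + i * (k + 1)) = 0 := by
    have e2 : 2 * (m + 1) = (m + 1) + (m + 1) := by ring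
    rw [e2, Finset.sum_range_add, ← Finset.sum_add_distrib]
    apply Finset.sum_eq_zero
    intro i hi
    have e3 : n + ((m + 1) + i) * (k + 1) = (n + i * (k + 1)) + (k + 1) * (m + 1) := by ring
    rw [e3, hbk]
    ring
  rw [hz]; ring
end

section
/- Let r ≥ 0 be an integer and x, y : ℤ → ℝ nonzero sequences satisfying x(n+1) = 1/y(n-2r-1) and y(n+1) = y(n-2r-1)/(x(n)y(n)) for n ≥ 0, with all x(n)y(n) > 0, and set A = x(0)y(0). Then x(n)y(n) = A^{(-1)^n} for all n ≥ 0, and consequently y((2r+2)n + s) = A^{(-1)^s · n} · y(s) for all n ≥ 0 and all s ∈ {-(2r+1), ..., 0}. -/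
theorem stmt_14 (r : ℕ) (x y : ℤ → ℝ)
    (hnz : ∀ n : ℤ, x n ≠ 0 ∧ y n ≠ 0)
    (hx : ∀ n : ℤ, 0 ≤ n → x (n + 1) = 1 / y (n - (2 * r + 1)))
    (hy : ∀ n : ℤ, 0 ≤ n → y (n + 1) = y (n - (2 * r + 1)) / (x n * y n))
    (hprodpos : ∀ n : ℤ, 0 < x n * y n)
    (A : ℝ) (hA : A = x 0 * y 0) :
    (∀ n : ℕ, x n * y n = A ^ ((-1 : ℤ) ^ n)) ∧
    (∀ n : ℕ, ∀ s : ℤ, -(2 * (r : ℤ) + 1) ≤ s → s ≤ 0 →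
      y ((2 * r + 2) * n + s) = A ^ ((-1 : ℤ) ^ s.natAbs * (n : ℤ)) * y s) := by
  have hA0 : 0 < A := hA ▸ hprodpos 0
  have hAne : A ≠ 0 := ne_of_gt hA0
  have hP : ∀ n : ℕ, x (n : ℤ) * y (n : ℤ) = A ^ ((-1 : ℤ) ^ n) := by
    intro n
    induction n with
    | zero => simpa using hA.symm
    | succ n ih =>
      have hn : (0 : ℤ) ≤ n := Int.natCast_nonneg n
      have hY : y ((n : ℤ) - (2 * r + 1)) ≠ 0 := (hnz _).2
      have hxy : x (n : ℤ) * y (n : ℤ) ≠ 0 := ne_of_gt (hprodpos _)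
      have key : x ((n : ℤ) + 1) * y ((n : ℤ) + 1) = (x (n : ℤ) * y (n : ℤ))⁻¹ := by
        rw [hx n hn, hy n hn]; field_simp
      push_cast
      rw [key, ih, ← zpow_neg, pow_succ]
      norm_num
  refine ⟨hP, ?_⟩
  intro n s hs1 hs2
  induction n with
  | zero => simp
  | succ n ih =>
    set k : ℤ := (2 * (r : ℤ) + 2) * n + s + (2 * r + 1) with hk
    have hk0 : (0 : ℤ) ≤ k := by
      have h1 : (0 : ℤ) ≤ (2 * (r : ℤ) + 2) * n := by positivity
      omega
    have hkc : ((k.toNat : ℤ)) = k := Int.toNat_of_nonneg hk0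
    have hPk : x k * y k = A ^ ((-1 : ℤ) ^ k.toNat) := by rw [← hkc]; exact hP k.toNat
    have hstep := hy k hk0
    have hm : k - (2 * (r : ℤ) + 1) = (2 * (r : ℤ) + 2) * n + s := by ring
    have hk1 : k + 1 = (2 * (r : ℤ) + 2) * (n + 1) + s := by ring
    obtain ⟨t, ht⟩ : ∃ t : ℤ, (2 * (r : ℤ) + 2) * (n : ℤ) = 2 * t := ⟨((r : ℤ) + 1) * n, by ring⟩
    have hpar : ((-1 : ℤ) ^ k.toNat) = -((-1 : ℤ) ^ s.natAbs) := by
      rcases Int.even_or_odd s with he | ho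
      · have h1 : Odd k.toNat := by
          rw [← Int.odd_coe_nat, hkc, Int.odd_iff]
          obtain ⟨c, hc⟩ := he
          omega
        have h2 : Even s.natAbs := Int.natAbs_even.mpr he
        rw [h1.neg_one_pow, h2.neg_one_pow]
      · have h1 : Even k.toNat := by
          rw [← Int.even_coe_nat, hkc, Int.even_iff]
          obtain ⟨c, hc⟩ := ho
          omega
        have h2 : Odd s.natAbs := Int.natAbs_odd.mpr ho
        rw [h1.neg_one_pow, h2.neg_one_pow]
        norm_num
    rw [hpar] at hPk
    have goal_arg : (2 * (r : ℤ) + 2) * ((n : ℤ) + 1) + s = k + 1 := by ring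
    push_cast
    rw [goal_arg, hstep, hm, ih, hPk,
      show ((-1 : ℤ) ^ s.natAbs * ((n : ℤ) + 1)) =
        (-1 : ℤ) ^ s.natAbs * n - (-(-1 : ℤ) ^ s.natAbs) from by ring,
      zpow_sub₀ hAne]
    ring
end

section
/- Let r ≥ 0 and x, y : ℤ → ℝ be positive sequences satisfying x(n+1) = 1/y(n-2r-1) and y(n+1) = y(n-2r-1)/(x(n)y(n)) for n ≥ 0, with A = x(0)y(0) > 1. Then the subsequence y((2r+2)n) = A^n · y(0) tends to infinity and x((2r+2)n + 2) = 1/(A^n · y(-2r)) tends to zero as n → ∞; in particular the solution is unbounded. -/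
/-!
The product `p n = x n * y n` satisfies `p (n + 1) = (p n)⁻¹`, so it equals `A` at even and
`A⁻¹` at odd times `n ≥ 0`. Hence at an odd time `s + 2r + 1` the second equation reads
`y (s + 2r + 2) = A * y s`: along each even residue class modulo `2r + 2` the sequence `y` is
geometric with ratio `A`, and `x (n + 2) = 1 / y (n - 2r)` inherits the reciprocal behaviour.
-/

open Filter

lemma apply_two_mul_add_one_of_succ_eq_inv {α : Type*} [InvolutiveInv α] {f : ℕ → α}
    (h : ∀ n, f (n + 1) = (f n)⁻¹) (n : ℕ) : f (2 * n + 1) = (f 0)⁻¹ := by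
  have periodic : Function.Periodic f 2 := fun n => by rw [h, h, inv_inv]
  rw [h, mul_comm]
  simpa using congrArg (·⁻¹) (periodic.nat_mul_eq n)

namespace DelayedSystem

variable {x y : ℤ → ℝ}

lemma mul_succ_eq_inv {d : ℤ} (hy0 : ∀ n, y n ≠ 0)
    (hx : ∀ n : ℤ, 0 ≤ n → x (n + 1) = 1 / y (n - d))
    (hy : ∀ n : ℤ, 0 ≤ n → y (n + 1) = y (n - d) / (x n * y n)) {n : ℤ} (hn : 0 ≤ n) :
    x (n + 1) * y (n + 1) = (x n * y n)⁻¹ := by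
  rw [hx n hn, hy n hn, one_div, ← mul_div_assoc, inv_mul_cancel₀ (hy0 _), one_div]

lemma mul_eq_inv_of_odd {d : ℤ} (hy0 : ∀ n, y n ≠ 0)
    (hx : ∀ n : ℤ, 0 ≤ n → x (n + 1) = 1 / y (n - d))
    (hy : ∀ n : ℤ, 0 ≤ n → y (n + 1) = y (n - d) / (x n * y n)) {m : ℤ} (hm : 0 ≤ m)
    (hodd : Odd m) : x m * y m = (x 0 * y 0)⁻¹ := by
  obtain ⟨k, rfl⟩ := hodd
  lift k to ℕ using by omega
  exact_mod_cast apply_two_mul_add_one_of_succ_eq_inv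
    (f := fun n : ℕ => x n * y n) (fun n => mod_cast mul_succ_eq_inv hy0 hx hy n.cast_nonneg) k

lemma apply_add_delay_add_one {d : ℤ} (hy0 : ∀ n, y n ≠ 0)
    (hx : ∀ n : ℤ, 0 ≤ n → x (n + 1) = 1 / y (n - d))
    (hy : ∀ n : ℤ, 0 ≤ n → y (n + 1) = y (n - d) / (x n * y n)) {s : ℤ} (hs : 0 ≤ s + d)
    (hodd : Odd (s + d)) : y (s + d + 1) = x 0 * y 0 * y s := by
  rw [hy _ hs, mul_eq_inv_of_odd hy0 hx hy hs hodd, add_sub_cancel_right, div_inv_eq_mul,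
    mul_comm]

lemma apply_add_mul_eq_pow_mul {r : ℕ} (hy0 : ∀ n, y n ≠ 0)
    (hx : ∀ n : ℤ, 0 ≤ n → x (n + 1) = 1 / y (n - (2 * r + 1)))
    (hy : ∀ n : ℤ, 0 ≤ n → y (n + 1) = y (n - (2 * r + 1)) / (x n * y n)) {s : ℤ}
    (hs : 0 ≤ s + (2 * r + 1)) (heven : Even s) (n : ℕ) :
    y (s + (2 * r + 2) * n) = (x 0 * y 0) ^ n * y s := by
  induction n with
  | zero => simp
  | succ k ih =>
    set t := s + (2 * r + 2) * k
    have ht : 0 ≤ t + (2 * r + 1) := by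
      have : 0 ≤ (2 * (r : ℤ) + 2) * k := by positivity
      linarith
    have hodd : Odd (t + (2 * r + 1)) :=
      (heven.add ⟨(r + 1) * k, by ring⟩).add_odd (odd_two_mul_add_one _)
    rw [show s + (2 * r + 2) * ((k + 1 : ℕ) : ℤ) = t + (2 * r + 1) + 1 by push_cast; ring,
      apply_add_delay_add_one hy0 hx hy ht hodd, ih]
    ring

end DelayedSystem

theorem stmt_15 (r : ℕ) (x y : ℤ → ℝ)
    (hpos : ∀ n : ℤ, 0 < x n ∧ 0 < y n)
    (hx : ∀ n : ℤ, 0 ≤ n → x (n + 1) = 1 / y (n - (2 * r + 1)))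
    (hy : ∀ n : ℤ, 0 ≤ n → y (n + 1) = y (n - (2 * r + 1)) / (x n * y n))
    (A : ℝ) (hA : A = x 0 * y 0) (hA1 : 1 < A) :
    (∀ n : ℕ, y ((2 * r + 2) * n) = A ^ n * y 0) ∧
    Tendsto (fun n : ℕ => y ((2 * r + 2) * n)) atTop atTop ∧
    (∀ n : ℕ, x ((2 * r + 2) * n + 2) = 1 / (A ^ n * y (-(2 * (r : ℤ))))) ∧
    Tendsto (fun n : ℕ => x ((2 * r + 2) * n + 2)) atTop (nhds 0) := by
  have hy0 : ∀ n, y n ≠ 0 := fun n => (hpos n).2.ne'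
  subst hA
  have hy_even (n : ℕ) : y ((2 * r + 2) * n) = (x 0 * y 0) ^ n * y 0 := by
    simpa using
      DelayedSystem.apply_add_mul_eq_pow_mul hy0 hx hy (s := 0) (by positivity) Even.zero n
  have hx_shift (n : ℕ) :
      x ((2 * r + 2) * n + 2) = 1 / ((x 0 * y 0) ^ n * y (-(2 * (r : ℤ)))) := by
    rw [← DelayedSystem.apply_add_mul_eq_pow_mul hy0 hx hy (by linarith)
        (even_neg.mpr (even_two_mul _)) n,
      show (2 * r + 2) * (n : ℤ) + 2 = (2 * r + 2) * n + 1 + 1 by ring, hx _ (by positivity)]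
    congr 2
    ring
  have hgrowth (c : ℝ) (hc : 0 < c) : Tendsto (fun n : ℕ => (x 0 * y 0) ^ n * c) atTop atTop :=
    (tendsto_pow_atTop_atTop_of_one_lt hA1).atTop_mul_const hc
  refine ⟨hy_even, ?_, hx_shift, ?_⟩
  · simpa only [hy_even] using hgrowth _ (hpos 0).2
  · simpa only [hx_shift, one_div, Pi.inv_def] using (hgrowth _ (hpos _).2).inv_tendsto_atTop
end
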